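/- Let L* be the 8-vertex graph with vertex set {a, b, c, v1, v2, v3, v4, v5} and edges a–v2, v2–b, a–v1, v1–b, b–v4, v4–c, b–v3, v3–c, a–v5, v5–c. Then there exists a common additive valuation (for instance, weight 1 on every vertex) such that no connected EF1 allocation of L* among 4 agents exists (hence no connected EF1-outer allocation). -/

import Mathlib

open Finset

variable {V : Type*}

/-- A piece of an allocation: either empty or inducing a connected subgraph. -/
def ConnPiece (G : SimpleGraph V) (S : Finset V) : Prop :=
  S = ∅ ∨ (G.induce (S : Set V)).Connected

/-- A connected allocation: a partition of `V` into `n` pieces, each connected. -/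
def IsConnAlloc (G : SimpleGraph V) {n : ℕ} (A : Fin n → Finset V) : Prop :=
  (∀ x : V, ∃! i, x ∈ A i) ∧ ∀ i, ConnPiece G (A i)

def IsMonotoneVal (v : Finset V → ℝ) : Prop :=
  v ∅ = 0 ∧ (∀ S, 0 ≤ v S) ∧ ∀ S T : Finset V, S ⊆ T → v S ≤ v T

def IsAdditiveVal (v : Finset V → ℝ) : Prop :=
  (∀ S, 0 ≤ v S) ∧ ∀ S : Finset V, v S = ∑ x ∈ S, v {x}

def IsEF1 [DecidableEq V] {n : ℕ} (v : Fin n → Finset V → ℝ) (A : Fin n → Finset V) : Prop :=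
  ∀ i j : Fin n, v i (A i) ≥ v i (A j) ∨ ∃ x ∈ A j, v i (A i) ≥ v i ((A j).erase x)

def IsEF1Outer [DecidableEq V] (G : SimpleGraph V) {n : ℕ}
    (v : Fin n → Finset V → ℝ) (A : Fin n → Finset V) : Prop :=
  ∀ i j : Fin n, v i (A i) ≥ v i (A j) ∨
    ∃ x ∈ A j, ConnPiece G ((A j).erase x) ∧ v i (A i) ≥ v i ((A j).erase x)

/-- A generalized cutset for `G`, with gap `r ≥ 2`. -/
structure GenCutset (G : SimpleGraph V) where
  t : ℕ
  C : Fin t → Finset V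
  τ : Fin t → ℕ
  r : ℕ
  r_ge : 2 ≤ r
  H : Fin ((∑ i, τ i) + r) → Finset V
  C_nonempty : ∀ i, (C i).Nonempty
  C_disjoint : ∀ i j, i ≠ j → Disjoint (C i) (C j)
  C_connected : ∀ i, (G.induce ((C i : Set V))).Connected
  H_nonempty : ∀ j, (H j).Nonempty
  H_disjoint : ∀ j k, j ≠ k → Disjoint (H j) (H k)
  H_partition : ∀ x : V, (∀ i, x ∉ C i) ↔ ∃ j, x ∈ H j
  H_independent : ∀ j k, j ≠ k → ∀ x ∈ H j, ∀ y ∈ H k, ¬ G.Adj x y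
  contact_unique : ∀ i j, ∀ x ∈ C i, ∀ y ∈ C i,
      (∃ z ∈ H j, G.Adj x z) → (∃ z ∈ H j, G.Adj y z) → x = y
  typeI_tau : ∀ i, (C i).card = 1 → τ i = 1
  typeII_indep : ∀ i i', i ≠ i' → 1 < (C i).card → 1 < (C i').card →
      ∀ x ∈ C i, ∀ y ∈ C i', ¬ G.Adj x y
  typeII_contacts : ∀ i, 1 < (C i).card →
      (∃ S : Finset (Fin ((∑ i, τ i) + r)), S.card = 2 * τ i + 1 ∧
        ∀ j, j ∈ S ↔ ∃ x ∈ C i, ∃ z ∈ H j, G.Adj x z) ∧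
      (∀ x ∈ C i, ∀ j k, (∃ z ∈ H j, G.Adj x z) → (∃ z ∈ H k, G.Adj x z) → j = k)

/-- The valence of a generalized cutset. -/
abbrev GenCutset.valence {G : SimpleGraph V} (cs : GenCutset G) : ℕ := ∑ i, cs.τ i

/-- `S` dominates a member of the cutset. -/
def GenCutset.Dominates {G : SimpleGraph V} (cs : GenCutset G)
    (S : Finset V) (i : Fin cs.t) : Prop :=
  ((cs.C i).card = 1 ∧ cs.C i ⊆ S) ∨
  (1 < (cs.C i).card ∧ ∃ x, x ∈ cs.C i ∧ x ∈ S ∧ ∃ y, y ∈ cs.C i ∧ y ∈ S ∧ x ≠ y ∧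
    (∃ j, ∃ z ∈ cs.H j, G.Adj x z) ∧ (∃ j, ∃ z ∈ cs.H j, G.Adj y z))

/-- The graph `L*`: vertices a,b,c,v1,v2,v3,v4,v5 are 0,1,2,3,4,5,6,7;
edges a–v2, v2–b, a–v1, v1–b, b–v4, v4–c, b–v3, v3–c, a–v5, v5–c. -/
def Lstar : SimpleGraph (Fin 8) :=
  SimpleGraph.fromRel (fun x y =>
    (x, y) ∈ ([(0,4),(4,1),(0,3),(3,1),(1,6),(6,2),(1,5),(5,2),(0,7),(7,2)] :
      List (Fin 8 × Fin 8)))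

/-! Give every vertex weight one. With eight goods and four agents, EF1 forces every bundle to
have exactly two vertices, so a connected bundle is an edge. The five vertices `v1, …, v5` are
pairwise nonadjacent, so no bundle contains two of them, and four bundles cannot hold all five. -/

lemma SimpleGraph.adj_of_connected_induce_pair {G : SimpleGraph V} {x y : V} (hxy : x ≠ y)
    (h : (G.induce ({x, y} : Set V)).Connected) : G.Adj x y := by
  have : Nontrivial ({x, y} : Set V) := (Set.nontrivial_pair hxy).coe_sort
  obtain ⟨u, hu⟩ := h.preconnected.exists_adj_of_nontrivial ⟨x, by simp⟩
  have hux : (u : V) ≠ x := (G.ne_of_adj hu).symm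
  have huy : (u : V) = y := (Set.mem_insert_iff.mp u.2).resolve_left hux
  simpa [huy] using hu

lemma isAdditiveVal_card : IsAdditiveVal (fun S : Finset V => (#S : ℝ)) :=
  ⟨fun _ => Nat.cast_nonneg _, fun S => by simp⟩

lemma IsEF1Outer.isEF1 [DecidableEq V] {G : SimpleGraph V} {n : ℕ} {v : Fin n → Finset V → ℝ}
    {A : Fin n → Finset V} (h : IsEF1Outer G v A) : IsEF1 v A := fun i j =>
  (h i j).imp_right fun ⟨x, hx, _, hle⟩ => ⟨x, hx, hle⟩

lemma IsEF1.card_le_card_add_one [DecidableEq V] {n : ℕ} {A : Fin n → Finset V}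
    (h : IsEF1 (fun _ => fun S => (#S : ℝ)) A) (i j : Fin n) : #(A j) ≤ #(A i) + 1 := by
  rcases h i j with hle | ⟨x, hx, hle⟩
  · have : #(A j) ≤ #(A i) := Nat.cast_le.mp hle
    omega
  · have : #((A j).erase x) ≤ #(A i) := Nat.cast_le.mp hle
    have := card_erase_of_mem hx
    omega

lemma IsConnAlloc.sum_card [Fintype V] {G : SimpleGraph V} {n : ℕ} {A : Fin n → Finset V}
    (hA : IsConnAlloc G A) : ∑ i, #(A i) = Fintype.card V := by
  classical
  choose f hf hf_unique using hA.1
  have hfiber : ∀ i, A i = univ.filter (f · = i) := fun i => by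
    ext x
    simpa using ⟨fun hx => (hf_unique x i hx).symm, fun hx => hx ▸ hf x⟩
  rw [← card_univ, card_eq_sum_card_fiberwise (f := f) (t := univ) fun _ _ => mem_univ _]
  simp only [hfiber]

lemma eq_of_sum_eq_mul_of_le_add_one {ι : Type*} [Fintype ι] {f : ι → ℕ} {k : ℕ}
    (hsum : ∑ i, f i = Fintype.card ι * k) (hf : ∀ i j, f j ≤ f i + 1) (i : ι) : f i = k := by
  have hconst : ∑ _ : ι, k = Fintype.card ι * k := by simp
  rcases lt_trichotomy (f i) k with hlt | heq | hgt
  · have : ∑ j, f j < ∑ _ : ι, k :=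
      sum_lt_sum (fun j _ => (hf i j).trans hlt) ⟨i, mem_univ _, hlt⟩
    omega
  · exact heq
  · have : ∑ _ : ι, k < ∑ j, f j :=
      sum_lt_sum (fun j _ => by have := hf j i; omega) ⟨i, mem_univ _, hgt⟩
    omega

lemma IsConnAlloc.card_le_of_isIndepSet [DecidableEq V] {G : SimpleGraph V} {n : ℕ}
    {A : Fin n → Finset V} (hA : IsConnAlloc G A) (hA2 : ∀ i, #(A i) ≤ 2) {s : Finset V}
    (hs : G.IsIndepSet s) : #s ≤ n := by
  by_contra! hlt
  choose f hf _ using hA.1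
  obtain ⟨x, hx, y, hy, hxy, hfxy⟩ := exists_ne_map_eq_of_card_lt_of_maps_to
    (t := univ) (by simpa using hlt) (f := f) fun _ _ => mem_univ _
  have hpair : A (f x) = {x, y} := by
    have hsub : {x, y} ⊆ A (f x) := by
      simp only [insert_subset_iff, singleton_subset_iff]
      exact ⟨hf x, hfxy ▸ hf y⟩
    exact (eq_of_subset_of_card_le hsub (by rw [card_pair hxy]; exact hA2 _)).symm
  rcases hA.2 (f x) with hempty | hconn
  · simp [hpair] at hempty
  · rw [hpair, coe_pair] at hconn
    exact hs hx hy hxy (G.adj_of_connected_induce_pair hxy hconn)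

instance Lstar.adjDecidable : DecidableRel Lstar.Adj := fun x y => by
  rw [Lstar, SimpleGraph.fromRel_adj]; infer_instance

lemma Lstar.isIndepSet_v1_to_v5 :
    Lstar.IsIndepSet (({3, 4, 5, 6, 7} : Finset (Fin 8)) : Set (Fin 8)) := by
  decide

/-- there is a common additive valuation under which the graph `L*` has no
connected EF1 (hence no connected EF1-outer) allocation among 4 agents. -/
theorem lstar_no_connected_EF1_four_agents :
    ∃ v : Finset (Fin 8) → ℝ, IsAdditiveVal v ∧
      ∀ A : Fin 4 → Finset (Fin 8), IsConnAlloc Lstar A →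
        ¬ IsEF1 (fun _ : Fin 4 => v) A ∧ ¬ IsEF1Outer Lstar (fun _ : Fin 4 => v) A := by
  refine ⟨fun S => (#S : ℝ), isAdditiveVal_card, fun A hA => ?_⟩
  have hEF1 : ¬ IsEF1 (fun _ : Fin 4 => fun S => (#S : ℝ)) A := fun h => by
    have hcard : ∀ i, #(A i) = 2 :=
      eq_of_sum_eq_mul_of_le_add_one (by simp [hA.sum_card]) h.card_le_card_add_one
    have := hA.card_le_of_isIndepSet (fun i => (hcard i).le) Lstar.isIndepSet_v1_to_v5
    simp at this
  exact ⟨hEF1, fun h => hEF1 h.isEF1⟩
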